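/- arXiv:1707.02577 — 5 statements merged into one kernel-verified Lean document; each statement's English description precedes it below -/
import Mathlib

section
/- For every pair (j,r) ∈ Π, the area A(j,r) is contained in the closed ball B(j, 7·5^r). -/
/-! Along a parent chain the radius bound `7 · 5^r` is preserved: a step to level `r + 1`
moves the centre by at most `5^(r+2) = 25 · 5^r`, and `7 + 25 ≤ 7 · 5`. Starting from the
assignment bound and iterating gives the claim. -/

open Set

theorem dist_le_seven_mul_five_zpow_succ {V : Type*} [PseudoMetricSpace V] {x y z : V}
    {r : ℤ} (hxy : dist x y ≤ 7 * 5 ^ r) (hyz : dist y z ≤ 5 ^ (r + 2)) :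
    dist x z ≤ 7 * 5 ^ (r + 1) := by
  have hpos : (0 : ℝ) < 5 ^ r := zpow_pos (by norm_num) r
  have h5 : ∀ n : ℤ, (5 : ℝ) ^ (r + n) = 5 ^ r * 5 ^ n := fun n =>
    zpow_add₀ (by norm_num) r n
  rw [h5] at hyz ⊢
  calc dist x z ≤ dist x y + dist y z := dist_triangle x y z
    _ ≤ 7 * 5 ^ r + 5 ^ r * 5 ^ (2 : ℤ) := add_le_add hxy hyz
    _ ≤ 7 * (5 ^ r * 5 ^ (1 : ℤ)) := by norm_num; linarith

theorem mapsTo_parent_of_dist_le {V : Type*} [PseudoMetricSpace V] {P : Set (V × ℤ)}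
    {parent : V × ℤ → V × ℤ}
    (hparent : ∀ u ∈ P, parent u ∈ P ∧
      (parent u = u ∨
        ((parent u).2 = u.2 + 1 ∧ dist u.1 (parent u).1 ≤ 5 ^ (u.2 + 2))))
    (p : V) :
    MapsTo parent {v | v ∈ P ∧ dist p v.1 ≤ 7 * 5 ^ v.2}
      {v | v ∈ P ∧ dist p v.1 ≤ 7 * 5 ^ v.2} := by
  rintro v ⟨hvP, hpv⟩
  obtain ⟨hparentP, hfix | ⟨hlevel, hstep⟩⟩ := hparent v hvP
  · rw [hfix]; exact ⟨hvP, hpv⟩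
  · exact ⟨hparentP, hlevel ▸ dist_le_seven_mul_five_zpow_succ hpv hstep⟩

theorem stmt_4_general {V : Type*} [MetricSpace V] (P : Finset (V × ℤ))
    (parent : V × ℤ → V × ℤ)
    (hparent : ∀ u ∈ P, parent u ∈ P ∧
      (parent u = u ∨
        ((parent u).2 = u.2 + 1 ∧ dist u.1 (parent u).1 ≤ 5 ^ (u.2 + 2))))
    (asg : V → V × ℤ)
    (hasg : ∀ p : V, asg p ∈ P ∧ dist p (asg p).1 ≤ 7 * 5 ^ (asg p).2)
    (u : V × ℤ) :
    {p : V | ∃ k : ℕ, parent^[k] (asg p) = u} ⊆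
      Metric.closedBall u.1 (7 * 5 ^ u.2) := by
  rintro p ⟨k, rfl⟩
  exact ((mapsTo_parent_of_dist_le hparent p).iterate k (hasg p)).2

/-- Lemma `area-contained-in-big-ball`: for every pair
`(j,r) ∈ Π`, the area `A(j,r)` is contained in the closed ball
`B(j, 7·5^r)`, where `A(j,r)` consists of the points `p` whose assigned
pair reaches `(j,r)` by iterating the parent map. -/
theorem stmt_4 {V : Type*} [MetricSpace V] (P : Finset (V × ℤ))
    (parent : V × ℤ → V × ℤ)
    (hparent : ∀ u ∈ P, parent u ∈ P ∧
      (parent u = u ∨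
        ((parent u).2 = u.2 + 1 ∧ dist u.1 (parent u).1 ≤ 5 ^ (u.2 + 2))))
    (asg : V → V × ℤ)
    (hasg : ∀ p : V, asg p ∈ P ∧ dist p (asg p).1 ≤ 7 * 5 ^ (asg p).2)
    (u : V × ℤ) (hu : u ∈ P) :
    {p : V | ∃ k : ℕ, parent^[k] (asg p) = u} ⊆
      Metric.closedBall u.1 (7 * 5 ^ u.2) :=
  stmt_4_general P parent hparent asg hasg u
end

section
/- For every client set C ⊆ V and every finite collection 𝔅 of pairs (j,r) with j ∈ F, r ∈ ℤ, f_j ≤ 5^r ≤ 5·W, whose closed balls B(j,5^r) cover C, there exists a finite subset S ⊆ Π such that C ⊆ ⋃_{(j,r) ∈ S} A(j,r) and Σ_{(j,r) ∈ S} (f_j + 7·5^r) ≤ 8·2^{2κ} · Σ_{(j,r) ∈ 𝔅} (f_j + 5^r). -/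
/-!
For each ball `B(j, 5^r)` of `𝔅`, take the centres `(j', r) ∈ Π` of the same level with
`d(j, j') ≤ 8·5^r`. Their areas cover `B(j, 5^r)`: a covering centre lies within `5^(r+1)` of `j`,
so `B(j, 5^r) ⊆ B(j', 7·5^r)`, and level-wise completeness puts every point of it in an area
`A(j'', r) ⊆ B(j'', 7·5^r)` with `d(j, j'') ≤ 8·5^r`. Two applications of doubling cover
`B(j, 8·5^r)` by `2^(2κ)` balls of radius `2·5^r`, each of which contains at most one such centre
since level-`r` centres are `5^(r+1)`-separated. Each centre costs `f_{j'} + 7·5^r ≤ 8·5^r`.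
-/

open Metric

def HasDoublingConstant (V : Type*) [PseudoMetricSpace V] (N : ℕ) : Prop :=
  ∀ (x : V) (R : ℝ), 0 < R → ∃ T : Finset V, T.card ≤ N ∧
    closedBall x R ⊆ ⋃ y ∈ T, closedBall y (R / 2)

section Doubling

variable {V : Type*} [PseudoMetricSpace V]

theorem HasDoublingConstant.exists_cover_pow {N : ℕ} (h : HasDoublingConstant V N) (n : ℕ) :
    ∀ (x : V) (R : ℝ), 0 < R → ∃ T : Finset V, T.card ≤ N ^ n ∧
      closedBall x R ⊆ ⋃ y ∈ T, closedBall y (R / 2 ^ n) := by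
  classical
  induction n with
  | zero => exact fun x R _ => ⟨{x}, by simp, by simp⟩
  | succ n ih =>
    intro x R hR
    obtain ⟨T, hTcard, hT⟩ := h x R hR
    choose U hUcard hU using fun y : V => ih y (R / 2) (half_pos hR)
    refine ⟨T.biUnion U, ?_, fun p hp => ?_⟩
    · calc (T.biUnion U).card ≤ T.card * N ^ n :=
            Finset.card_biUnion_le_card_mul _ _ _ fun y _ => hUcard y
        _ ≤ N * N ^ n := Nat.mul_le_mul_right _ hTcard
        _ = N ^ (n + 1) := (pow_succ' N n).symm
    · obtain ⟨y, hy, hpy⟩ := Set.mem_iUnion₂.1 (hT hp)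
      obtain ⟨z, hz, hpz⟩ := Set.mem_iUnion₂.1 (hU y hpy)
      rw [div_div, ← pow_succ'] at hpz
      exact Set.mem_iUnion₂.2 ⟨z, Finset.mem_biUnion.2 ⟨y, hy, hz⟩, hpz⟩

theorem Finset.card_le_card_of_forall_dist_le_of_pairwise_lt {ι : Type*} {X : Finset ι}
    {c : ι → V} {T : Finset V} {ρ : ℝ} (hcov : ∀ i ∈ X, ∃ y ∈ T, dist (c i) y ≤ ρ)
    (hsep : (X : Set ι).Pairwise fun i i' => 2 * ρ < dist (c i) (c i')) :
    X.card ≤ T.card := by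
  classical
  obtain rfl | ⟨i₀, -⟩ := X.eq_empty_or_nonempty
  · simp
  have : Nonempty V := ⟨c i₀⟩
  choose! g hgT hg using hcov
  refine Finset.card_le_card_of_injOn g hgT fun i hi i' hi' hgi => ?_
  by_contra hne
  have := (dist_triangle (c i) (g i) (c i')).trans
    (add_le_add (hg i hi) ((dist_comm (c i') _).symm.trans_le (hgi ▸ hg i' hi')))
  linarith [hsep hi hi' hne]

end Doubling

theorem Finset.sum_biUnion_le_of_nonneg {ι β : Type*} [DecidableEq β] {s : Finset ι}
    {t : ι → Finset β} {f : β → ℝ} (hf : ∀ x ∈ s.biUnion t, 0 ≤ f x) :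
    ∑ x ∈ s.biUnion t, f x ≤ ∑ i ∈ s, ∑ x ∈ t i, f x := by
  have hsigma : s.biUnion t = (s.sigma t).image Sigma.snd := by ext; simp
  rw [hsigma] at hf ⊢
  exact (Finset.sum_image_le_of_nonneg hf).trans_eq (Finset.sum_sigma s t fun x => f x.2)

section Areas

variable {V : Type*} [MetricSpace V]

open Classical in
noncomputable def nearbyCenters (P : Finset (V × ℤ)) (b : V × ℤ) : Finset (V × ℤ) :=
  P.filter fun u => u.2 = b.2 ∧ dist b.1 u.1 ≤ 8 * 5 ^ b.2

theorem zpow_five_succ (r : ℤ) : (5 : ℝ) ^ (r + 1) = 5 * 5 ^ r := by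
  rw [zpow_add_one₀ (by norm_num), mul_comm]

theorem exists_mem_nearbyCenters_mem_area {P : Finset (V × ℤ)} {A : V × ℤ → Set V}
    (hA : ∀ u ∈ P, A u ⊆ closedBall u.1 (7 * 5 ^ u.2))
    (hAcomplete : ∀ (r : ℤ) (p : V),
      (∃ j : V, (j, r) ∈ P ∧ p ∈ closedBall j (7 * 5 ^ r)) →
      ∃ j'' : V, (j'', r) ∈ P ∧ p ∈ A (j'', r))
    {b : V × ℤ} (hb : ∃ j' : V, (j', b.2) ∈ P ∧ dist b.1 j' ≤ 5 ^ (b.2 + 1))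
    {p : V} (hp : p ∈ closedBall b.1 (5 ^ b.2)) :
    ∃ u ∈ nearbyCenters P b, p ∈ A u := by
  obtain ⟨j', hj'P, hj'⟩ := hb
  rw [zpow_five_succ] at hj'
  have hpos : (0 : ℝ) < 5 ^ b.2 := zpow_pos (by norm_num) _
  have hpj' : p ∈ closedBall j' (7 * 5 ^ b.2) := by
    rw [mem_closedBall] at hp ⊢
    linarith [dist_triangle p b.1 j']
  obtain ⟨j'', hj''P, hpA⟩ := hAcomplete b.2 p ⟨j', hj'P, hpj'⟩
  have hpj'' : dist p j'' ≤ 7 * 5 ^ b.2 := hA _ hj''P hpA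
  refine ⟨(j'', b.2), Finset.mem_filter.2 ⟨hj''P, rfl, ?_⟩, hpA⟩
  linarith [dist_triangle b.1 p j'', mem_closedBall'.1 hp]

theorem card_nearbyCenters_le {N : ℕ} (hdoub : HasDoublingConstant V N) {P : Finset (V × ℤ)}
    (hPsep : ∀ (j j' : V) (r : ℤ), (j, r) ∈ P → (j', r) ∈ P → j ≠ j' →
      dist j j' > 5 ^ (r + 1))
    (b : V × ℤ) : (nearbyCenters P b).card ≤ N ^ 2 := by
  have hpos : (0 : ℝ) < 5 ^ b.2 := zpow_pos (by norm_num) _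
  obtain ⟨T, hTcard, hT⟩ := hdoub.exists_cover_pow 2 b.1 (8 * 5 ^ b.2) (by positivity)
  refine le_trans (Finset.card_le_card_of_forall_dist_le_of_pairwise_lt (c := Prod.fst)
    (ρ := 2 * 5 ^ b.2) (fun u hu => ?_) fun u hu u' hu' hne => ?_) hTcard
  · obtain ⟨-, -, hdist⟩ := Finset.mem_filter.1 hu
    obtain ⟨y, hy, hy'⟩ := Set.mem_iUnion₂.1 (hT (mem_closedBall'.2 hdist))
    exact ⟨y, hy, by rw [← mem_closedBall]; convert hy' using 2; ring⟩
  · obtain ⟨huP, hur, -⟩ := Finset.mem_filter.1 (Finset.mem_coe.1 hu)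
    obtain ⟨hu'P, hu'r, -⟩ := Finset.mem_filter.1 (Finset.mem_coe.1 hu')
    have hfst : u.1 ≠ u'.1 := fun h => hne (Prod.ext h (hur.trans hu'r.symm))
    have := hPsep u.1 u'.1 b.2 (hur ▸ huP) (hu'r ▸ hu'P) hfst
    rw [zpow_five_succ] at this
    linarith

theorem sum_cost_nearbyCenters_le {f : V → ℝ} {P : Finset (V × ℤ)}
    (hPf : ∀ u ∈ P, f u.1 ≤ 5 ^ u.2) {b : V × ℤ} (hfb : 0 ≤ f b.1) {M : ℕ}
    (hcard : (nearbyCenters P b).card ≤ M) :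
    ∑ u ∈ nearbyCenters P b, (f u.1 + 7 * 5 ^ u.2) ≤ 8 * M * (f b.1 + 5 ^ b.2) := by
  have hpos : (0 : ℝ) < 5 ^ b.2 := zpow_pos (by norm_num) _
  have hterm : ∀ u ∈ nearbyCenters P b, f u.1 + 7 * 5 ^ u.2 ≤ 8 * 5 ^ b.2 := by
    intro u hu
    obtain ⟨huP, hur, -⟩ := Finset.mem_filter.1 hu
    have := hPf u huP
    rw [hur] at this ⊢
    linarith
  have hcard' : ((nearbyCenters P b).card : ℝ) ≤ M := by exact_mod_cast hcard
  calc ∑ u ∈ nearbyCenters P b, (f u.1 + 7 * 5 ^ u.2)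
      ≤ (nearbyCenters P b).card • (8 * 5 ^ b.2 : ℝ) := Finset.sum_le_card_nsmul _ _ _ hterm
    _ ≤ M * (8 * 5 ^ b.2) := by rw [nsmul_eq_mul]; gcongr
    _ ≤ 8 * M * (f b.1 + 5 ^ b.2) := by nlinarith [M.cast_nonneg (α := ℝ)]

end Areas

theorem stmt_5_general {V : Type*} [MetricSpace V] (κ : ℕ)
    (hdoub : ∀ (x : V) (R : ℝ), 0 < R → ∃ T : Finset V, T.card ≤ 2 ^ κ ∧
      Metric.closedBall x R ⊆ ⋃ y ∈ T, Metric.closedBall y (R / 2))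
    (W : ℝ)
    (F : Finset V) (f : V → ℝ) (hf : ∀ j ∈ F, 0 < f j)
    (P : Finset (V × ℤ))
    (hPmem : ∀ u ∈ P, u.1 ∈ F ∧ f u.1 ≤ 5 ^ u.2)
    (hPcover : ∀ j ∈ F, ∀ r : ℤ, f j ≤ 5 ^ r → (5 : ℝ) ^ r ≤ 5 * W →
      ∃ j' : V, (j', r) ∈ P ∧ dist j j' ≤ 5 ^ (r + 1))
    (hPsep : ∀ (j j' : V) (r : ℤ), (j, r) ∈ P → (j', r) ∈ P → j ≠ j' →
      dist j j' > 5 ^ (r + 1))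
    (A : V × ℤ → Set V)
    (hA : ∀ u ∈ P, A u ⊆ Metric.closedBall u.1 (7 * 5 ^ u.2))
    (hAcomplete : ∀ (r : ℤ) (p : V),
      (∃ j : V, (j, r) ∈ P ∧ p ∈ Metric.closedBall j (7 * 5 ^ r)) →
      ∃ j'' : V, (j'', r) ∈ P ∧ p ∈ A (j'', r))
    (C : Set V) (𝔅 : Finset (V × ℤ))
    (h𝔅 : ∀ b ∈ 𝔅, b.1 ∈ F ∧ f b.1 ≤ 5 ^ b.2 ∧ (5 : ℝ) ^ b.2 ≤ 5 * W)
    (hcov : C ⊆ ⋃ b ∈ 𝔅, Metric.closedBall b.1 ((5 : ℝ) ^ b.2)) :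
    ∃ S : Finset (V × ℤ), S ⊆ P ∧ (C ⊆ ⋃ u ∈ S, A u) ∧
      ∑ u ∈ S, (f u.1 + 7 * 5 ^ u.2) ≤
        8 * 2 ^ (2 * κ) * ∑ b ∈ 𝔅, (f b.1 + 5 ^ b.2) := by
  classical
  have hSP : 𝔅.biUnion (nearbyCenters P) ⊆ P :=
    Finset.biUnion_subset.2 fun _ _ => Finset.filter_subset _ _
  refine ⟨𝔅.biUnion (nearbyCenters P), hSP, fun p hp => ?_, ?_⟩
  · obtain ⟨b, hb, hpb⟩ := Set.mem_iUnion₂.1 (hcov hp)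
    obtain ⟨hbF, hbf, hbW⟩ := h𝔅 b hb
    obtain ⟨u, hu, hpu⟩ :=
      exists_mem_nearbyCenters_mem_area hA hAcomplete (hPcover b.1 hbF b.2 hbf hbW) hpb
    exact Set.mem_iUnion₂.2 ⟨u, Finset.mem_biUnion.2 ⟨b, hb, hu⟩, hpu⟩
  · have hcost_nonneg : ∀ u ∈ P, 0 ≤ f u.1 + 7 * 5 ^ u.2 := fun u hu => by
      have := hf _ (hPmem u hu).1
      positivity
    calc ∑ u ∈ 𝔅.biUnion (nearbyCenters P), (f u.1 + 7 * 5 ^ u.2)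
        ≤ ∑ b ∈ 𝔅, ∑ u ∈ nearbyCenters P b, (f u.1 + 7 * 5 ^ u.2) :=
          Finset.sum_biUnion_le_of_nonneg fun u hu => hcost_nonneg u (hSP hu)
      _ ≤ ∑ b ∈ 𝔅, 8 * ((2 ^ (2 * κ) : ℕ) : ℝ) * (f b.1 + 5 ^ b.2) :=
          Finset.sum_le_sum fun b hb =>
            sum_cost_nearbyCenters_le (fun u hu => (hPmem u hu).2) (hf _ (h𝔅 b hb).1).le
              (pow_mul' 2 2 κ ▸ card_nearbyCenters_le hdoub hPsep b)
      _ = 8 * 2 ^ (2 * κ) * ∑ b ∈ 𝔅, (f b.1 + 5 ^ b.2) := by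
          rw [← Finset.mul_sum]
          norm_cast

/-- Lemma `Areas-suffice`: every client set coverable by a
finite collection `𝔅` of balls `B(j,5^r)` (with `j ∈ F`, `f j ≤ 5^r ≤ 5W`)
can be covered by a finite subcollection `S ⊆ Π` of areas, of total cost
`Σ_{(j,r)∈S} (f j + 7·5^r) ≤ 8·2^(2κ)·Σ_{(j,r)∈𝔅} (f j + 5^r)`. -/
theorem stmt_5 {V : Type*} [MetricSpace V] (κ : ℕ)
    (hdoub : ∀ (x : V) (R : ℝ), 0 < R → ∃ T : Finset V, T.card ≤ 2 ^ κ ∧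
      Metric.closedBall x R ⊆ ⋃ y ∈ T, Metric.closedBall y (R / 2))
    (W : ℝ) (hW : 0 < W) (hdiam : ∀ x y : V, dist x y ≤ W)
    (F : Finset V) (f : V → ℝ) (hf : ∀ j ∈ F, 0 < f j)
    (P : Finset (V × ℤ))
    (hPmem : ∀ u ∈ P, u.1 ∈ F ∧ f u.1 ≤ 5 ^ u.2)
    (hPcover : ∀ j ∈ F, ∀ r : ℤ, f j ≤ 5 ^ r → (5 : ℝ) ^ r ≤ 5 * W →
      ∃ j' : V, (j', r) ∈ P ∧ dist j j' ≤ 5 ^ (r + 1))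
    (hPsep : ∀ (j j' : V) (r : ℤ), (j, r) ∈ P → (j', r) ∈ P → j ≠ j' →
      dist j j' > 5 ^ (r + 1))
    (A : V × ℤ → Set V)
    (hA : ∀ u ∈ P, A u ⊆ Metric.closedBall u.1 (7 * 5 ^ u.2))
    (hAcomplete : ∀ (r : ℤ) (p : V),
      (∃ j : V, (j, r) ∈ P ∧ p ∈ Metric.closedBall j (7 * 5 ^ r)) →
      ∃ j'' : V, (j'', r) ∈ P ∧ p ∈ A (j'', r))
    (C : Set V) (𝔅 : Finset (V × ℤ))
    (h𝔅 : ∀ b ∈ 𝔅, b.1 ∈ F ∧ f b.1 ≤ 5 ^ b.2 ∧ (5 : ℝ) ^ b.2 ≤ 5 * W)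
    (hcov : C ⊆ ⋃ b ∈ 𝔅, Metric.closedBall b.1 ((5 : ℝ) ^ b.2)) :
    ∃ S : Finset (V × ℤ), S ⊆ P ∧ (C ⊆ ⋃ u ∈ S, A u) ∧
      ∑ u ∈ S, (f u.1 + 7 * 5 ^ u.2) ≤
        8 * 2 ^ (2 * κ) * ∑ b ∈ 𝔅, (f b.1 + 5 ^ b.2) :=
  stmt_5_general κ hdoub W F f hf P hPmem hPcover hPsep A hA hAcomplete C 𝔅 h𝔅 hcov
end

section
/- For every point p ∈ V and every integer r, the set of pairs (j,r) ∈ Π with logradius exactly r such that p ∈ B(j, 7·5^r) is finite and has at most 2^{2κ} elements. -/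
/-- for every point `p` and logradius `r`, at most `2^(2κ)`
pairs `(j,r) ∈ Π` of logradius exactly `r` satisfy `p ∈ B(j, 7·5^r)`. -/
theorem stmt_9 {V : Type*} [MetricSpace V] (κ : ℕ)
    (hdoub : ∀ (x : V) (R : ℝ), 0 < R → ∃ T : Finset V, T.card ≤ 2 ^ κ ∧
      Metric.closedBall x R ⊆ ⋃ y ∈ T, Metric.closedBall y (R / 2))
    (F : Set V) (P : Set (V × ℤ)) (hPF : ∀ u ∈ P, u.1 ∈ F)
    (hPsep : ∀ (j j' : V) (s : ℤ), (j, s) ∈ P → (j', s) ∈ P → j ≠ j' →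
      dist j j' > 5 ^ (s + 1))
    (p : V) (r : ℤ) :
    {u : V × ℤ | u ∈ P ∧ u.2 = r ∧
        p ∈ Metric.closedBall u.1 (7 * 5 ^ r)}.Finite ∧
    {u : V × ℤ | u ∈ P ∧ u.2 = r ∧
        p ∈ Metric.closedBall u.1 (7 * 5 ^ r)}.ncard ≤ 2 ^ (2 * κ) := by
  classical
  set R : ℝ := 7 * 5 ^ r with hRdef
  have h5pos : (0:ℝ) < 5 ^ r := by positivity
  have hRpos : 0 < R := by positivity
  obtain ⟨T₁, hT₁card, hT₁cov⟩ := hdoub p R hRpos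
  choose T₂ hT₂card hT₂cov using fun y : V => hdoub y (R / 2) (by positivity)
  set T : Finset V := T₁.biUnion (fun y => T₂ y) with hTdef
  have hTcard : T.card ≤ 2 ^ (2 * κ) := by
    calc T.card ≤ ∑ y ∈ T₁, (T₂ y).card := Finset.card_biUnion_le
      _ ≤ ∑ _y ∈ T₁, 2 ^ κ := Finset.sum_le_sum fun y _ => hT₂card y
      _ = T₁.card * 2 ^ κ := by simp [Finset.sum_const]
      _ ≤ 2 ^ κ * 2 ^ κ := Nat.mul_le_mul_right _ hT₁card
      _ = 2 ^ (2 * κ) := by rw [← pow_add, two_mul]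
  have hcov : ∀ x ∈ Metric.closedBall p R, ∃ y ∈ T, x ∈ Metric.closedBall y (R / 4) := by
    intro x hx
    obtain ⟨y, hyT, hxy⟩ := Set.mem_iUnion₂.1 (hT₁cov hx)
    obtain ⟨z, hzT, hxz⟩ := Set.mem_iUnion₂.1 (hT₂cov y hxy)
    refine ⟨z, Finset.mem_biUnion.2 ⟨y, hyT, hzT⟩, ?_⟩
    have : R / 2 / 2 = R / 4 := by ring
    rwa [this] at hxz
  set A : Set (V × ℤ) := {u : V × ℤ | u ∈ P ∧ u.2 = r ∧
      p ∈ Metric.closedBall u.1 (7 * 5 ^ r)} with hAdef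
  set f : V × ℤ → V := fun u =>
    if h : ∃ y ∈ T, u.1 ∈ Metric.closedBall y (R / 4) then h.choose else p with hfdef
  have hfA : ∀ u ∈ A, f u ∈ T ∧ dist u.1 (f u) ≤ R / 4 := by
    intro u hu
    have hu1 : u.1 ∈ Metric.closedBall p R := by
      rw [Metric.mem_closedBall, dist_comm]
      exact hu.2.2
    have h : ∃ y ∈ T, u.1 ∈ Metric.closedBall y (R / 4) := hcov u.1 hu1
    simp only [hfdef, dif_pos h]
    exact ⟨h.choose_spec.1, h.choose_spec.2⟩
  have hinj : Set.InjOn f A := by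
    intro u hu u' hu' hfe
    have h1 := hfA u hu
    have h2 := hfA u' hu'
    have hd : dist u.1 u'.1 ≤ R / 2 := by
      calc dist u.1 u'.1 ≤ dist u.1 (f u) + dist (f u) u'.1 := dist_triangle _ _ _
        _ = dist u.1 (f u) + dist u'.1 (f u') := by rw [hfe, dist_comm (f u') u'.1]
        _ ≤ R / 4 + R / 4 := add_le_add h1.2 h2.2
        _ = R / 2 := by ring
    have hne : u.1 = u'.1 := by
      by_contra hne
      have := hPsep u.1 u'.1 r (by rw [← hu.2.1]; exact hu.1) (by rw [← hu'.2.1]; exact hu'.1) hne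
      have h51 : (5:ℝ) ^ (r + 1) = 5 * 5 ^ r := by
        rw [zpow_add₀ (by norm_num : (5:ℝ) ≠ 0), zpow_one]; ring
      have : (5:ℝ) * 5 ^ r < R / 2 := by
        calc (5:ℝ) * 5 ^ r = 5 ^ (r+1) := h51.symm
          _ < dist u.1 u'.1 := this
          _ ≤ R / 2 := hd
      rw [hRdef] at this
      nlinarith
    have : u.2 = u'.2 := by rw [hu.2.1, hu'.2.1]
    exact Prod.ext hne this
  have himg : f '' A ⊆ ↑T := fun x ⟨u, hu, he⟩ => he ▸ (hfA u hu).1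
  have hfin : A.Finite :=
    Set.Finite.of_finite_image (T.finite_toSet.subset himg) hinj
  refine ⟨hfin, ?_⟩
  calc A.ncard = (f '' A).ncard := (Set.ncard_image_of_injOn hinj).symm
    _ ≤ (↑T : Set V).ncard := Set.ncard_le_ncard himg T.finite_toSet
    _ = T.card := by rw [Set.ncard_coe_finset]
    _ ≤ 2 ^ (2 * κ) := hTcard
end

section
/- For v ∈ N let Desc(v) = {u ∈ N : parent^m(u) = v for some natural number m}, let Children(v) = {u ∈ N : u ≠ v and parent(u) = v}, and let opt(v) denote the minimum of Σ_{u ∈ S} c(u) over all S ⊆ Desc(v) with C ∩ A(v) ⊆ ⋃_{u ∈ S} A(u) (the minimum exists since N is finite and S = {v} is feasible). Then: if some client p ∈ C has asg(p) = v, then opt(v) = c(v); otherwise, opt(v) = min( c(v), Σ_{u ∈ Children(v)} opt(u) ). -/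
/-!
Since `level` strictly increases along every non-trivial `parent` step, the only cycles of
`parent` are fixed points, so the nodes form a forest and the areas of two children of `v`
are disjoint. A client assigned to `v` itself can only be covered by `v`, which forces
`opt v = c v`. Otherwise every client of `A v` lies in the area of a unique child of `v`: a cover
of `v` avoiding `v` splits into covers of the children, and conversely covers of the children
combine into a cover of `v`.
-/

open Finset

lemma exists_iterate_eq_or_exists_iterate_eq {α : Type*} {f : α → α} {x a b : α} {i j : ℕ}
    (ha : f^[i] x = a) (hb : f^[j] x = b) : (∃ t, f^[t] a = b) ∨ ∃ t, f^[t] b = a := by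
  rcases le_total i j with h | h
  · exact Or.inl ⟨j - i, by rw [← ha, ← Function.iterate_add_apply, Nat.sub_add_cancel h, hb]⟩
  · exact Or.inr ⟨i - j, by rw [← hb, ← Function.iterate_add_apply, Nat.sub_add_cancel h, ha]⟩

lemma sum_biUnion_le_sum_sum {ι α : Type*} [DecidableEq α] {f : α → ℝ} (hf : ∀ a, 0 ≤ f a)
    (s : Finset ι) (t : ι → Finset α) :
    ∑ x ∈ s.biUnion t, f x ≤ ∑ i ∈ s, ∑ x ∈ t i, f x := by
  rw [← sup_eq_biUnion]
  refine apply_sup_le_sum (f := fun u => ∑ x ∈ u, f x) sum_empty (fun {u w} => ?_) s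
  have := sum_union_inter (s₁ := u) (s₂ := w) (f := f)
  have := sum_nonneg fun x (_ : x ∈ u ∩ w) => hf x
  simp only [sup_eq_union]
  linarith

section Forest

variable {N : Type*} {parent : N → N} {level : N → ℤ}

lemma level_le_level_iterate (hlevel : ∀ u, parent u ≠ u → level (parent u) = level u + 1)
    (k : ℕ) (x : N) : level x ≤ level (parent^[k] x) := by
  induction k with
  | zero => exact le_rfl
  | succ k ih =>
    rw [Function.iterate_succ_apply']
    by_cases h : parent (parent^[k] x) = parent^[k] x
    · rwa [h]
    · rw [hlevel _ h]
      omega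

lemma level_lt_level_iterate (hlevel : ∀ u, parent u ≠ u → level (parent u) = level u + 1)
    {k : ℕ} {x : N} (h : parent^[k] x ≠ x) : level x < level (parent^[k] x) := by
  cases k with
  | zero => exact absurd rfl h
  | succ k =>
    have hx : parent x ≠ x := fun hx => h (Function.iterate_fixed hx _)
    rw [Function.iterate_succ_apply]
    linarith [hlevel x hx, level_le_level_iterate hlevel k (parent x)]

lemma eq_of_iterate_eq_of_iterate_eq
    (hlevel : ∀ u, parent u ≠ u → level (parent u) = level u + 1)
    {m k : ℕ} {u v : N} (hm : parent^[m] u = v) (hk : parent^[k] v = u) : u = v := by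
  by_contra huv
  have huv' := level_lt_level_iterate hlevel (k := m) (x := u) (by rwa [hm, ne_comm])
  have hvu' := level_lt_level_iterate hlevel (k := k) (x := v) (by rwa [hk])
  rw [hm] at huv'
  rw [hk] at hvu'
  omega

lemma eq_or_eq_of_iterate_child (hlevel : ∀ u, parent u ≠ u → level (parent u) = level u + 1)
    {i m : ℕ} {w v x : N} (hw : parent w = v) (hx : parent^[i] w = x) (hxv : parent^[m] x = v) :
    x = w ∨ x = v := by
  cases i with
  | zero => exact Or.inl hx.symm
  | succ i =>
    rw [Function.iterate_succ_apply, hw] at hx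
    exact Or.inr (eq_of_iterate_eq_of_iterate_eq hlevel hxv hx)

lemma eq_of_iterate_eq_of_children
    (hlevel : ∀ u, parent u ≠ u → level (parent u) = level u + 1)
    {i j : ℕ} {w₁ w₂ v x : N} (hw₁ : w₁ ≠ v ∧ parent w₁ = v) (hw₂ : w₂ ≠ v ∧ parent w₂ = v)
    (hx₁ : parent^[i] x = w₁) (hx₂ : parent^[j] x = w₂) : w₁ = w₂ := by
  rcases exists_iterate_eq_or_exists_iterate_eq hx₁ hx₂ with ⟨t, ht⟩ | ⟨t, ht⟩
  · exact ((eq_or_eq_of_iterate_child hlevel (m := 1) hw₁.2 ht hw₂.2).resolve_right hw₂.1).symm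
  · exact (eq_or_eq_of_iterate_child hlevel (m := 1) hw₂.2 ht hw₁.2).resolve_right hw₁.1

lemma exists_child_of_iterate_eq {k : ℕ} {a v : N} (hk : parent^[k] a = v) (ha : a ≠ v) :
    ∃ w, (w ≠ v ∧ parent w = v) ∧ ∃ j, parent^[j] a = w := by
  induction k generalizing a with
  | zero => exact absurd hk ha
  | succ k ih =>
    by_cases hpa : parent a = v
    · exact ⟨a, ⟨ha, hpa⟩, 0, rfl⟩
    · obtain ⟨w, hw, j, hj⟩ := ih hk hpa
      exact ⟨w, hw, j + 1, hj⟩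

def children [Fintype N] [DecidableEq N] (parent : N → N) (v : N) : Finset N :=
  univ.filter fun u => u ≠ v ∧ parent u = v

end Forest

section Cover

variable {V N : Type*} (parent : N → N) (asg : V → N) (C : Set V)

def area (v : N) : Set V := {p | ∃ k : ℕ, parent^[k] (asg p) = v}

def IsCover (v : N) (S : Finset N) : Prop :=
  (∀ u ∈ S, ∃ m : ℕ, parent^[m] u = v) ∧ C ∩ area parent asg v ⊆ ⋃ u ∈ S, area parent asg u

variable {parent asg C} {level : N → ℤ}

lemma isCover_singleton (v : N) : IsCover parent asg C v {v} :=
  ⟨fun u hu => ⟨0, mem_singleton.1 hu⟩, fun p hp => by simpa using hp.2⟩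

lemma mem_of_isCover_of_asg_eq (hlevel : ∀ u, parent u ≠ u → level (parent u) = level u + 1)
    {v : N} {S : Finset N} (hS : IsCover parent asg C v S) {p : V} (hp : p ∈ C)
    (hpv : asg p = v) : v ∈ S := by
  obtain ⟨u, huS, k, hk⟩ : ∃ u ∈ S, p ∈ area parent asg u := by
    simpa using hS.2 ⟨hp, 0, hpv⟩
  rw [hpv] at hk
  obtain ⟨m, hm⟩ := hS.1 u huS
  rwa [← eq_of_iterate_eq_of_iterate_eq hlevel hm hk]

lemma isCover_biUnion_children [Fintype N] [DecidableEq N] {v : N} (hv : ∀ p ∈ C, asg p ≠ v)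
    {T : N → Finset N} (hT : ∀ w ∈ children parent v, IsCover parent asg C w (T w)) :
    IsCover parent asg C v ((children parent v).biUnion T) := by
  constructor
  · intro x hx
    obtain ⟨w, hw, hxw⟩ := mem_biUnion.1 hx
    obtain ⟨m, hm⟩ := (hT w hw).1 x hxw
    exact ⟨m + 1, by rw [Function.iterate_succ_apply', hm, (mem_filter.1 hw).2.2]⟩
  · rintro p ⟨hp, k, hk⟩
    obtain ⟨w, hw, j, hj⟩ := exists_child_of_iterate_eq hk (hv p hp)
    have hwc : w ∈ children parent v := mem_filter.2 ⟨mem_univ w, hw⟩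
    obtain ⟨x, hxT, hpx⟩ : ∃ x ∈ T w, p ∈ area parent asg x := by
      simpa using (hT w hwc).2 ⟨hp, j, hj⟩
    simp only [Set.mem_iUnion]
    exact ⟨x, mem_biUnion.2 ⟨w, hwc, hxT⟩, hpx⟩

open Classical in
lemma isCover_filter_of_child (hlevel : ∀ u, parent u ≠ u → level (parent u) = level u + 1)
    {v w : N} {S : Finset N} (hS : IsCover parent asg C v S) (hvS : v ∉ S) (hw : parent w = v) :
    IsCover parent asg C w (S.filter fun x => ∃ m : ℕ, parent^[m] x = w) := by
  refine ⟨fun x hx => (mem_filter.1 hx).2, ?_⟩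
  rintro p ⟨hp, j, hj⟩
  have hpv : p ∈ area parent asg v := ⟨j + 1, by rw [Function.iterate_succ_apply', hj, hw]⟩
  obtain ⟨x, hxS, k, hk⟩ : ∃ x ∈ S, p ∈ area parent asg x := by simpa using hS.2 ⟨hp, hpv⟩
  simp only [Set.mem_iUnion]
  refine ⟨x, mem_filter.2 ⟨hxS, ?_⟩, k, hk⟩
  rcases exists_iterate_eq_or_exists_iterate_eq hk hj with hxw | ⟨t, ht⟩
  · exact hxw
  · obtain ⟨m, hm⟩ := hS.1 x hxS
    rcases eq_or_eq_of_iterate_child hlevel hw ht hm with rfl | rfl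
    · exact ⟨0, rfl⟩
    · exact absurd hxS hvS

variable [Fintype N] [DecidableEq N] {c : N → ℝ} {opt : N → ℝ}

lemma opt_le_sum_children (hc : ∀ u, 0 ≤ c u)
    (hopt_le : ∀ v S, IsCover parent asg C v S → opt v ≤ ∑ u ∈ S, c u)
    (hopt_ex : ∀ v, ∃ S, IsCover parent asg C v S ∧ opt v = ∑ u ∈ S, c u)
    {v : N} (hv : ∀ p ∈ C, asg p ≠ v) : opt v ≤ ∑ w ∈ children parent v, opt w := by
  choose T hT hopt using hopt_ex
  calc opt v ≤ ∑ x ∈ (children parent v).biUnion T, c x :=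
        hopt_le v _ (isCover_biUnion_children hv fun w _ => hT w)
    _ ≤ ∑ w ∈ children parent v, ∑ x ∈ T w, c x := sum_biUnion_le_sum_sum hc _ _
    _ = ∑ w ∈ children parent v, opt w := sum_congr rfl fun w _ => (hopt w).symm

lemma sum_children_le_of_isCover (hlevel : ∀ u, parent u ≠ u → level (parent u) = level u + 1)
    (hc : ∀ u, 0 ≤ c u) (hopt_le : ∀ v S, IsCover parent asg C v S → opt v ≤ ∑ u ∈ S, c u)
    {v : N} {S : Finset N} (hS : IsCover parent asg C v S) (hvS : v ∉ S) :
    ∑ w ∈ children parent v, opt w ≤ ∑ x ∈ S, c x := by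
  classical
  let part : N → Finset N := fun w => S.filter fun x => ∃ m : ℕ, parent^[m] x = w
  have hdisj : (children parent v : Set N).PairwiseDisjoint part := by
    intro w₁ hw₁ w₂ hw₂ hne
    refine disjoint_left.2 fun x hx₁ hx₂ => hne ?_
    obtain ⟨i, hi⟩ := (mem_filter.1 hx₁).2
    obtain ⟨j, hj⟩ := (mem_filter.1 hx₂).2
    exact eq_of_iterate_eq_of_children hlevel (mem_filter.1 hw₁).2 (mem_filter.1 hw₂).2 hi hj
  calc ∑ w ∈ children parent v, opt w ≤ ∑ w ∈ children parent v, ∑ x ∈ part w, c x :=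
        sum_le_sum fun w hw =>
          hopt_le w _ (isCover_filter_of_child hlevel hS hvS (mem_filter.1 hw).2.2)
    _ = ∑ x ∈ (children parent v).biUnion part, c x := (sum_biUnion hdisj).symm
    _ ≤ ∑ x ∈ S, c x :=
        sum_le_sum_of_subset_of_nonneg (biUnion_subset.2 fun w _ => filter_subset _ _)
          fun x _ _ => hc x

end Cover

theorem stmt_13_general {V N : Type*} [Fintype N] [DecidableEq N]
    (parent : N → N) (level : N → ℤ)
    (hlevel : ∀ u : N, parent u ≠ u → level (parent u) = level u + 1)
    (asg : V → N) (A : N → Set V)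
    (hA : ∀ v : N, A v = {p : V | ∃ k : ℕ, parent^[k] (asg p) = v})
    (C : Set V)
    (c : N → ℝ) (hc : ∀ u : N, 0 < c u)
    (opt : N → ℝ)
    (hopt_le : ∀ (v : N) (S : Finset N),
      (∀ u ∈ S, ∃ m : ℕ, parent^[m] u = v) →
      (C ∩ A v ⊆ ⋃ u ∈ S, A u) → opt v ≤ ∑ u ∈ S, c u)
    (hopt_ex : ∀ v : N, ∃ S : Finset N,
      (∀ u ∈ S, ∃ m : ℕ, parent^[m] u = v) ∧
      (C ∩ A v ⊆ ⋃ u ∈ S, A u) ∧ opt v = ∑ u ∈ S, c u)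
    (v : N) :
    ((∃ p ∈ C, asg p = v) → opt v = c v) ∧
    ((¬ ∃ p ∈ C, asg p = v) →
      opt v = min (c v)
        (∑ u ∈ Finset.univ.filter (fun u => u ≠ v ∧ parent u = v), opt u)) := by
  obtain rfl : A = area parent asg := funext hA
  have hc₀ : ∀ u, 0 ≤ c u := fun u => (hc u).le
  have hle : ∀ u S, IsCover parent asg C u S → opt u ≤ ∑ x ∈ S, c x :=
    fun u S hS => hopt_le u S hS.1 hS.2
  have hex : ∀ u, ∃ S, IsCover parent asg C u S ∧ opt u = ∑ x ∈ S, c x :=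
    fun u => (hopt_ex u).imp fun _ h => ⟨⟨h.1, h.2.1⟩, h.2.2⟩
  obtain ⟨S, hS, hoptS⟩ := hex v
  have hle_c : opt v ≤ c v := by simpa using hle v {v} (isCover_singleton v)
  have hc_le : v ∈ S → c v ≤ opt v := fun hvS => hoptS ▸ single_le_sum (fun u _ => hc₀ u) hvS
  refine ⟨fun ⟨p, hp, hpv⟩ => hle_c.antisymm (hc_le (mem_of_isCover_of_asg_eq hlevel hS hp hpv)),
    fun hno => le_antisymm (le_min hle_c ?_) ?_⟩
  · exact opt_le_sum_children hc₀ hle hex fun p hp hpv => hno ⟨p, hp, hpv⟩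
  · by_cases hvS : v ∈ S
    · exact (min_le_left _ _).trans (hc_le hvS)
    · exact (min_le_right _ _).trans (hoptS ▸ sum_children_le_of_isCover hlevel hc₀ hle hS hvS)

/-- correctness of the bottom-up recurrence for the optimal
restricted cost. `opt v` is the minimum cost of a set `S` of descendants of
`v` whose areas cover `C ∩ A(v)`; if some client is assigned directly to `v`
then `opt v = c v`, otherwise `opt v = min (c v) (Σ_{u child of v} opt u)`. -/
theorem stmt_13 {V N : Type*} [Fintype N] [DecidableEq N]
    (parent : N → N) (level : N → ℤ)
    (hlevel : ∀ u : N, parent u ≠ u → level (parent u) = level u + 1)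
    (asg : V → N) (A : N → Set V)
    (hA : ∀ v : N, A v = {p : V | ∃ k : ℕ, parent^[k] (asg p) = v})
    (C : Set V) (hC : C.Finite)
    (c : N → ℝ) (hc : ∀ u : N, 0 < c u)
    (opt : N → ℝ)
    (hopt_le : ∀ (v : N) (S : Finset N),
      (∀ u ∈ S, ∃ m : ℕ, parent^[m] u = v) →
      (C ∩ A v ⊆ ⋃ u ∈ S, A u) → opt v ≤ ∑ u ∈ S, c u)
    (hopt_ex : ∀ v : N, ∃ S : Finset N,
      (∀ u ∈ S, ∃ m : ℕ, parent^[m] u = v) ∧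
      (C ∩ A v ⊆ ⋃ u ∈ S, A u) ∧ opt v = ∑ u ∈ S, c u)
    (v : N) :
    ((∃ p ∈ C, asg p = v) → opt v = c v) ∧
    ((¬ ∃ p ∈ C, asg p = v) →
      opt v = min (c v)
        (∑ u ∈ Finset.univ.filter (fun u => u ≠ v ∧ parent u = v), opt u)) :=
  stmt_13_general parent level hlevel asg A hA C c hc opt hopt_le hopt_ex v
end

section
/- For every integer r with ρ_min ≤ r ≤ ρ_max, the union of the areas of logradius r equals the union of the corresponding balls: ⋃_{(j,r) ∈ Π with logradius r} A(j,r) = ⋃_{(j,r) ∈ Π with logradius r} B(j, 7·5^r). -/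
lemma chain_aux {V : Type*} [MetricSpace V]
    (ρmax : ℤ) (P : Finset (V × ℤ)) (j₀ : V)
    (parent : V × ℤ → V × ℤ)
    (hparentroot : parent (j₀, ρmax) = (j₀, ρmax))
    (hparent : ∀ u ∈ P, u ≠ (j₀, ρmax) →
      parent u ∈ P ∧ (parent u).2 = u.2 + 1 ∧
      dist u.1 (parent u).1 ≤ 5 ^ (u.2 + 2))
    (w : V × ℤ) (hw : w ∈ P) (k : ℕ) :
    parent^[k] w ∈ P ∧ w.2 ≤ (parent^[k] w).2 ∧
      dist w.1 (parent^[k] w).1 ≤ 25/4 * ((5:ℝ) ^ ((parent^[k] w).2) - 5 ^ w.2) := by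
  induction k with
  | zero => simp [hw]
  | succ k ih =>
    obtain ⟨hP, hle, hd⟩ := ih
    rw [Function.iterate_succ_apply']
    set v := parent^[k] w with hv
    by_cases hvr : v = (j₀, ρmax)
    · rw [hvr, hparentroot, ← hvr]; exact ⟨hP, hle, hd⟩
    · obtain ⟨h1, h2, h3⟩ := hparent v hP hvr
      refine ⟨h1, by omega, ?_⟩
      have e1 : (5:ℝ) ^ ((parent v).2) = 5 ^ v.2 * 5 := by
        rw [h2, zpow_add_one₀ (by norm_num : (5:ℝ) ≠ 0)]
      have e2 : (5:ℝ) ^ (v.2 + 2) = 5 ^ v.2 * 25 := by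
        rw [zpow_add₀ (by norm_num : (5:ℝ) ≠ 0)]; norm_num
      have := dist_triangle w.1 v.1 (parent v).1
      rw [e2] at h3
      rw [e1]
      linarith

lemma chain_exact {V : Type*} [MetricSpace V]
    (ρmax : ℤ) (P : Finset (V × ℤ)) (j₀ : V)
    (parent : V × ℤ → V × ℤ)
    (hparent : ∀ u ∈ P, u ≠ (j₀, ρmax) →
      parent u ∈ P ∧ (parent u).2 = u.2 + 1 ∧
      dist u.1 (parent u).1 ≤ 5 ^ (u.2 + 2))
    (w : V × ℤ) (hw : w ∈ P) (k : ℕ) (hk : w.2 + k ≤ ρmax) :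
    parent^[k] w ∈ P ∧ (parent^[k] w).2 = w.2 + k := by
  induction k with
  | zero => simp [hw]
  | succ k ih =>
    obtain ⟨hP, h2⟩ := ih (by omega)
    rw [Function.iterate_succ_apply']
    set v := parent^[k] w with hv
    have hvr : v ≠ (j₀, ρmax) := by
      intro h
      have : v.2 = ρmax := by rw [h]
      omega
    obtain ⟨h1, h2', _⟩ := hparent v hP hvr
    exact ⟨h1, by omega⟩

/-- for every logradius `r ∈ [ρmin, ρmax]`, the union of the
areas of logradius `r` equals the union of the corresponding balls
`B(j, 7·5^r)`. -/
theorem stmt_15 {V : Type*} [MetricSpace V]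
    (ρmin ρmax : ℤ) (P : Finset (V × ℤ))
    (hPr : ∀ u ∈ P, ρmin ≤ u.2 ∧ u.2 ≤ ρmax)
    (j₀ : V) (hroot : (j₀, ρmax) ∈ P)
    (hrootuniq : ∀ u ∈ P, u.2 = ρmax → u = (j₀, ρmax))
    (parent : V × ℤ → V × ℤ)
    (hparentroot : parent (j₀, ρmax) = (j₀, ρmax))
    (hfix : ∀ u ∈ P, parent u = u → u = (j₀, ρmax))
    (hparent : ∀ u ∈ P, u ≠ (j₀, ρmax) →
      parent u ∈ P ∧ (parent u).2 = u.2 + 1 ∧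
      dist u.1 (parent u).1 ≤ 5 ^ (u.2 + 2))
    (asg : V → V × ℤ)
    (hasg : ∀ p ∈ ⋃ w ∈ P, Metric.closedBall w.1 (7 * 5 ^ w.2),
      asg p ∈ P ∧ p ∈ Metric.closedBall (asg p).1 (7 * 5 ^ (asg p).2) ∧
      ∀ u ∈ P, p ∈ Metric.closedBall u.1 (7 * 5 ^ u.2) → (asg p).2 ≤ u.2)
    (A : V × ℤ → Set V)
    (hA : ∀ u : V × ℤ, A u = {p : V |
      p ∈ (⋃ w ∈ P, Metric.closedBall w.1 (7 * 5 ^ w.2)) ∧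
      ∃ k : ℕ, parent^[k] (asg p) = u})
    (r : ℤ) (hr1 : ρmin ≤ r) (hr2 : r ≤ ρmax) :
    (⋃ u ∈ P.filter (fun u => u.2 = r), A u) =
      (⋃ u ∈ P.filter (fun u => u.2 = r),
        Metric.closedBall u.1 (7 * 5 ^ u.2)) := by
  ext p
  simp only [Set.mem_iUnion, Finset.mem_filter, exists_prop]
  constructor
  · rintro ⟨u, ⟨huP, hur⟩, hpA⟩
    rw [hA] at hpA
    obtain ⟨hpU, k, hk⟩ := hpA
    obtain ⟨hwP, hpw, _⟩ := hasg p hpU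
    set w := asg p with hwdef
    obtain ⟨_, hle, hd⟩ := chain_aux ρmax P j₀ parent hparentroot hparent w hwP k
    rw [hk] at hle hd
    refine ⟨u, ⟨huP, hur⟩, ?_⟩
    rw [Metric.mem_closedBall] at hpw ⊢
    have htri := dist_triangle p w.1 u.1
    have hmon : (5:ℝ) ^ w.2 ≤ 5 ^ u.2 :=
      zpow_le_zpow_right₀ (by norm_num : (1:ℝ) ≤ 5) hle
    linarith
  · rintro ⟨u, ⟨huP, hur⟩, hpb⟩
    have hpU : p ∈ ⋃ w ∈ P, Metric.closedBall w.1 (7 * 5 ^ w.2) := by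
      exact Set.mem_biUnion huP hpb
    obtain ⟨hwP, hpw, hmin⟩ := hasg p hpU
    set w := asg p with hwdef
    have hwle : w.2 ≤ r := hur ▸ hmin u huP hpb
    set k := (r - w.2).toNat with hkdef
    have hk : w.2 + (k : ℤ) = r := by omega
    obtain ⟨hvP, hv2⟩ := chain_exact ρmax P j₀ parent hparent w hwP k (by omega)
    refine ⟨parent^[k] w, ⟨hvP, by omega⟩, ?_⟩
    rw [hA]
    exact ⟨hpU, k, rfl⟩
end
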